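/- arXiv:2203.12022 — 4 statements merged into one kernel-verified Lean document; each statement's English description precedes it below -/
import Mathlib

section
/- Compound optics compose: given a bicategory B and pseudofunctors F, G from B to Cat, for 0-cells i, j, k of B, objects a : F i, b : G i, s : F j, t : G j, u : F k, v : G k, the map sending representatives (⟨m, f, g⟩, ⟨n, f', g'⟩) — where m : i ⟶ j, n : j ⟶ k, f : s ⟶ (F.map m).obj a, g : (G.map m).obj b ⟶ t, f' : u ⟶ (F.map n).obj s, g' : (G.map n).obj t ⟶ v — to ⟨m ≫ n, f' ≫ (F.map n).map f ≫ (F.mapComp m n).inv.app a, (G.mapComp m n).hom.app b ≫ (G.map n).map g ≫ g'⟩ descends to a well-defined composition O_{i,j}⟨a,b⟩⟨s,t⟩ × O_{j,k}⟨s,t⟩⟨u,v⟩ → O_{i,k}⟨a,b⟩⟨u,v⟩ on the quotient sets, and this composition is associative (using the associator 2-cells of B and the coherence of F and G). -/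
open CategoryTheory

universe w₂ w₁ v₂ v₁ v u

variable {B : Type u} [Bicategory.{w₁, v} B]

section
variable (F G : Pseudofunctor B Cat.{v₁, u₁})

/-- Raw representatives of compound optics: a residual 1-cell `m : i ⟶ j`, a forward part
`s ⟶ (F.map m).obj a` and a backward part `(G.map m).obj b ⟶ t`. -/
def COpticRaw {i j : B} (a : F.obj i) (b : G.obj i) (s : F.obj j) (t : G.obj j) : Type _ :=
  Σ m : i ⟶ j, (s ⟶ (F.map m).toFunctor.obj a) × ((G.map m).toFunctor.obj b ⟶ t)

/-- The generating relation of the coend over the hom-category `B(i,j)`: for a 2-cell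
`φ : m ⟶ m'`, identify `⟨m', f ≫ (F.map₂ φ).app a, g⟩` with `⟨m, f, (G.map₂ φ).app b ≫ g⟩`. -/
inductive COpticRel {i j : B} (a : F.obj i) (b : G.obj i) (s : F.obj j) (t : G.obj j) :
    COpticRaw F G a b s t → COpticRaw F G a b s t → Prop
  | mk {m m' : i ⟶ j} (φ : m ⟶ m') (f : s ⟶ (F.map m).toFunctor.obj a) (g : (G.map m').toFunctor.obj b ⟶ t) :
      COpticRel a b s t ⟨m', f ≫ (F.map₂ φ).toNatTrans.app a, g⟩ ⟨m, f, (G.map₂ φ).toNatTrans.app b ≫ g⟩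

/-- Composition of raw compound optics, using the compositors of `F` and `G`. -/
def COpticRaw.comp {i j k : B} {a : F.obj i} {b : G.obj i} {s : F.obj j} {t : G.obj j}
    {u : F.obj k} {v : G.obj k} (x : COpticRaw F G a b s t) (y : COpticRaw F G s t u v) :
    COpticRaw F G a b u v :=
  ⟨x.1 ≫ y.1,
   y.2.1 ≫ (F.map y.1).toFunctor.map x.2.1 ≫ (F.mapComp x.1 y.1).inv.toNatTrans.app a,
   (G.mapComp x.1 y.1).hom.toNatTrans.app b ≫ (G.map y.1).toFunctor.map x.2.2 ≫ y.2.2⟩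

end

/-!
A 2-cell `φ : m ⟶ m'` identifying two representatives of the first factor is carried to the
composite by the whiskering `φ ▷ n`, one in the second factor by `m ◁ φ`; since `F` and `G`
send whiskerings to whiskerings conjugated by their compositors, the slid representatives are
again related, so composition descends to the coend. The two bracketings of a triple composite
have residuals `(m ≫ n) ≫ o` and `m ≫ (n ≫ o)`; the associator relates them, and the coherence
of `F` and `G` with the associator makes the forward and backward parts match.
-/

namespace COpticRaw

open Bicategory

variable {F G : Pseudofunctor B Cat.{v₁, u₁}} {i j k l : B} {a : F.obj i} {b : G.obj i}
  {s : F.obj j} {t : G.obj j} {u : F.obj k} {v : G.obj k} {p : F.obj l} {q : G.obj l}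

theorem quot_mk_eq_of_hom₂ {m m' : i ⟶ j} (φ : m ⟶ m') (f : s ⟶ (F.map m).toFunctor.obj a)
    (g : (G.map m').toFunctor.obj b ⟶ t) {f' : s ⟶ (F.map m').toFunctor.obj a}
    {g' : (G.map m).toFunctor.obj b ⟶ t} (hf : f' = f ≫ (F.map₂ φ).toNatTrans.app a)
    (hg : g' = (G.map₂ φ).toNatTrans.app b ≫ g) :
    Quot.mk (COpticRel F G a b s t) ⟨m', f', g⟩ = Quot.mk _ ⟨m, f, g'⟩ := by
  subst hf hg
  exact Quot.sound (COpticRel.mk φ f g)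

theorem quot_mk_comp_of_rel_left {x x' : COpticRaw F G a b s t} (h : COpticRel F G a b s t x x')
    (y : COpticRaw F G s t u v) :
    Quot.mk (COpticRel F G a b u v) (x.comp F G y) = Quot.mk _ (x'.comp F G y) := by
  obtain ⟨n, f', g'⟩ := y
  obtain ⟨φ, f, g⟩ := h
  refine quot_mk_eq_of_hom₂ (φ ▷ n) _ _ ?_ ?_ <;> simp [Pseudofunctor.map₂_whisker_right]

theorem quot_mk_comp_of_rel_right (x : COpticRaw F G a b s t) {y y' : COpticRaw F G s t u v}
    (h : COpticRel F G s t u v y y') :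
    Quot.mk (COpticRel F G a b u v) (x.comp F G y) = Quot.mk _ (x.comp F G y') := by
  obtain ⟨m, f, g⟩ := x
  obtain ⟨φ, f', g'⟩ := h
  refine quot_mk_eq_of_hom₂ (m ◁ φ) _ _ ?_ ?_ <;> simp [Pseudofunctor.map₂_whisker_left]

theorem comp_comp_fst_map₂_associator (x : COpticRaw F G a b s t) (y : COpticRaw F G s t u v)
    (z : COpticRaw F G u v p q) :
    ((x.comp F G y).comp F G z).2.1 ≫ (F.map₂ (α_ x.1 y.1 z.1).hom).toNatTrans.app a =
      (x.comp F G (y.comp F G z)).2.1 := by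
  obtain ⟨m, f, -⟩ := x
  obtain ⟨n, f', -⟩ := y
  obtain ⟨o, f'', -⟩ := z
  have hnat := NatTrans.naturality (F.mapComp n o).inv.toNatTrans f
  dsimp at hnat
  -- fusing under `F.map o` lets the compositor of `m, n` cancel against its inverse
  simp [comp, Pseudofunctor.map₂_associator, -Functor.map_comp, ← Functor.map_comp_assoc]
  rw [Functor.map_comp_assoc, reassoc_of% hnat]

theorem map₂_associator_comp_comp_snd (x : COpticRaw F G a b s t) (y : COpticRaw F G s t u v)
    (z : COpticRaw F G u v p q) :
    (G.map₂ (α_ x.1 y.1 z.1).hom).toNatTrans.app b ≫ (x.comp F G (y.comp F G z)).2.2 =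
      ((x.comp F G y).comp F G z).2.2 := by
  obtain ⟨m, -, g⟩ := x
  obtain ⟨n, -, g'⟩ := y
  obtain ⟨o, -, g''⟩ := z
  simp [comp, Pseudofunctor.map₂_associator]

theorem quot_mk_comp_assoc (x : COpticRaw F G a b s t) (y : COpticRaw F G s t u v)
    (z : COpticRaw F G u v p q) :
    Quot.mk (COpticRel F G a b p q) ((x.comp F G y).comp F G z) =
      Quot.mk _ (x.comp F G (y.comp F G z)) :=
  (quot_mk_eq_of_hom₂ (α_ x.1 y.1 z.1).hom _ _ (comp_comp_fst_map₂_associator x y z).symm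
    (map₂_associator_comp_comp_snd x y z).symm).symm

end COpticRaw

/-- The compound optic set `O_{i,j}⟨a,b⟩⟨s,t⟩`. -/
abbrev COptic (F G : Pseudofunctor B Cat.{v₁, u₁}) {i j : B} (a : F.obj i) (b : G.obj i)
    (s : F.obj j) (t : G.obj j) : Type _ :=
  Quot (COpticRel F G a b s t)

def COptic.comp {F G : Pseudofunctor B Cat.{v₁, u₁}} {i j k : B} {a : F.obj i} {b : G.obj i}
    {s : F.obj j} {t : G.obj j} {u : F.obj k} {v : G.obj k} :
    COptic F G a b s t → COptic F G s t u v → COptic F G a b u v :=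
  Quot.lift₂ (fun x y => Quot.mk _ (x.comp F G y))
    (fun x _ _ => COpticRaw.quot_mk_comp_of_rel_right x)
    (fun _ _ y h => COpticRaw.quot_mk_comp_of_rel_left h y)

/-- Compound optics compose: the composition of raw compound optics descends to a
well-defined composition on the coend quotients `O_{i,j}⟨a,b⟩⟨s,t⟩`, and this composition
is associative. -/
theorem coptic_comp_welldefined_assoc (F G : Pseudofunctor B Cat.{v₁, u₁}) :
    (∀ (i j k : B) (a : F.obj i) (b : G.obj i) (s : F.obj j) (t : G.obj j)
        (u : F.obj k) (v : G.obj k)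
        (x x' : COpticRaw F G a b s t) (y y' : COpticRaw F G s t u v),
        Quot.mk (COpticRel F G a b s t) x = Quot.mk _ x' →
        Quot.mk (COpticRel F G s t u v) y = Quot.mk _ y' →
        Quot.mk (COpticRel F G a b u v) (COpticRaw.comp F G x y) =
          Quot.mk _ (COpticRaw.comp F G x' y')) ∧
    (∀ (i j k l : B) (a : F.obj i) (b : G.obj i) (s : F.obj j) (t : G.obj j)
        (u : F.obj k) (v : G.obj k) (p : F.obj l) (q : G.obj l)
        (x : COpticRaw F G a b s t) (y : COpticRaw F G s t u v)
        (z : COpticRaw F G u v p q),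
        Quot.mk (COpticRel F G a b p q) (COpticRaw.comp F G (COpticRaw.comp F G x y) z) =
          Quot.mk _ (COpticRaw.comp F G x (COpticRaw.comp F G y z))) := by
  constructor
  · intro _ _ _ _ _ _ _ _ _ _ _ _ _ hx hy
    exact congrArg₂ COptic.comp hx hy
  · intro _ _ _ _ _ _ _ _ _ _ _ _ x y z
    exact COpticRaw.quot_mk_comp_assoc x y z
end

section
/- Every polynomial lens admits an ommatidia representation: with K, N types and s, t : K → Type, a, b : N → Type, the canonical map from Σ c : N → K → Type, (∀ k, s k → Σ n, a n × c n k) × (∀ k, (Σ n, b n × c n k) → t k) to ∀ k, s k → Σ n, a n × (b n → t k), sending ⟨c, f, g⟩ to the function λ k x, ⟨n, α, λ β, g k ⟨n, β, γ⟩⟩ where ⟨n, α, γ⟩ = f k x, is surjective. -/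
universe u

/-- Every polynomial lens admits an ommatidia representation: the canonical map from
`Σ c : N → K → Type u, (∀ k, s k → Σ n, a n × c n k) × (∀ k, (Σ n, b n × c n k) → t k)`
to the set of polynomial lenses `∀ k, s k → Σ n, a n × (b n → t k)` is surjective. -/
theorem ommatidia_surjective {K N : Type u} (s t : K → Type u) (a b : N → Type u) :
    Function.Surjective
      (fun (x : Σ c : N → K → Type u,
          (∀ k, s k → Σ n, a n × c n k) × (∀ k, (Σ n, b n × c n k) → t k)) =>
        (fun k σ =>
          match x.2.1 k σ with
          | ⟨n, α, γ⟩ => ⟨n, α, fun β => x.2.2 k ⟨n, β, γ⟩⟩ :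
          ∀ k : K, s k → Σ n : N, a n × (b n → t k))) := by
  intro L
  refine ⟨⟨fun n k => b n → t k,
    fun k σ => ⟨(L k σ).1, (L k σ).2.1, (L k σ).2.2⟩,
    fun k p => p.2.2 p.2.1⟩, ?_⟩
  funext k σ
  rfl
end

section
/- The profunctor action on copresheaves is functorial with respect to profunctor composition: for small categories N, M, K, profunctors p : Nᵒᵖ × M ⥤ Type and q : Mᵒᵖ × K ⥤ Type, and a copresheaf a : N ⥤ Type, there is an isomorphism, natural in k : K, between ((a ⊗ p) ⊗ q) k and (a ⊗ (p ⋄ q)) k, where ⊗ is the coend action of a profunctor on a copresheaf and ⋄ is profunctor composition. -/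
open CategoryTheory Opposite

universe u

section

variable {A B : Type u} [SmallCategory A] [SmallCategory B]

private lemma map_prod_swap (p : (A × B) ⥤ Type u) {a a' : A} {b b' : B}
    (f : a ⟶ a') (g : b ⟶ b') (z : p.obj (a, b)) :
    p.map ((𝟙 a', g) : (a', b) ⟶ (a', b')) (p.map ((f, 𝟙 b) : (a, b) ⟶ (a', b)) z) =
      p.map ((f, 𝟙 b') : (a, b') ⟶ (a', b')) (p.map ((𝟙 a, g) : (a, b) ⟶ (a, b')) z) := by
  rw [← FunctorToTypes.map_comp_apply, ← FunctorToTypes.map_comp_apply]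
  simp [prod_comp]

end

variable {N M K : Type u} [SmallCategory N] [SmallCategory M] [SmallCategory K]

/-- Raw elements of the coend `∫^n a n × p⟨n, m⟩`. -/
def ActRaw (a : N ⥤ Type u) (p : (Nᵒᵖ × M) ⥤ Type u) (m : M) : Type u :=
  Σ n : N, a.obj n × p.obj (op n, m)

/-- The generating relation of the coend `∫^n a n × p⟨n, m⟩`: for `h : n ⟶ n'`,
identify `⟨n', a.map h x, y⟩` with `⟨n, x, p.map ⟨h.op, 𝟙 m⟩ y⟩`. -/
inductive ActRel (a : N ⥤ Type u) (p : (Nᵒᵖ × M) ⥤ Type u) (m : M) :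
    ActRaw a p m → ActRaw a p m → Prop
  | mk {n n' : N} (h : n ⟶ n') (x : a.obj n) (y : p.obj (op n', m)) :
      ActRel a p m ⟨n', a.map h x, y⟩ ⟨n, x, p.map ((h.op, 𝟙 m) : (op n', m) ⟶ (op n, m)) y⟩

/-- The coend action `a ⊗ p : M ⥤ Type` of a profunctor `p : Nᵒᵖ × M ⥤ Type` on a
copresheaf `a : N ⥤ Type`, with `(a ⊗ p) m = ∫^n a n × p⟨n, m⟩`. -/
def Act (a : N ⥤ Type u) (p : (Nᵒᵖ × M) ⥤ Type u) : M ⥤ Type u where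
  obj m := Quot (ActRel a p m)
  map {m m'} g := TypeCat.ofHom <| Quot.lift
    (fun z => Quot.mk _ ⟨z.1, z.2.1, p.map ((𝟙 (op z.1), g) : (op z.1, m) ⟶ (op z.1, m')) z.2.2⟩)
    (by
      rintro _ _ ⟨h, x, y⟩
      dsimp only
      rw [map_prod_swap]
      exact Quot.sound (ActRel.mk h x _))
  map_id m := by
    ext z
    induction z using Quot.ind with
    | _ z =>
      show Quot.mk _ ⟨z.1, z.2.1,
          p.map ((𝟙 (op z.1), 𝟙 m) : (op z.1, m) ⟶ (op z.1, m)) z.2.2⟩ = Quot.mk _ z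
      rw [show ((𝟙 (op z.1), 𝟙 m) : (op z.1, m) ⟶ (op z.1, m)) = 𝟙 (op z.1, m) from rfl,
        FunctorToTypes.map_id_apply]
      rfl
  map_comp {m m' m''} g g' := by
    ext z
    induction z using Quot.ind with
    | _ z =>
      show Quot.mk (ActRel a p m'') ⟨z.1, z.2.1,
            p.map ((𝟙 (op z.1), g ≫ g') : (op z.1, m) ⟶ (op z.1, m'')) z.2.2⟩ =
          Quot.mk (ActRel a p m'') ⟨z.1, z.2.1,
            p.map ((𝟙 (op z.1), g') : (op z.1, m') ⟶ (op z.1, m''))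
              (p.map ((𝟙 (op z.1), g) : (op z.1, m) ⟶ (op z.1, m')) z.2.2)⟩
      have hc : (((𝟙 (op z.1), g) : (op z.1, m) ⟶ (op z.1, m')) ≫
            ((𝟙 (op z.1), g') : (op z.1, m') ⟶ (op z.1, m'')) :
            (op z.1, m) ⟶ (op z.1, m'')) =
          ((𝟙 (op z.1), g ≫ g') : (op z.1, m) ⟶ (op z.1, m'')) := by
        simp [prod_comp]
      rw [← hc, FunctorToTypes.map_comp_apply]

/-- Raw elements of the coend `∫^m p⟨n, m⟩ × q⟨m, k⟩`. -/
def ProfCompRaw (p : (Nᵒᵖ × M) ⥤ Type u) (q : (Mᵒᵖ × K) ⥤ Type u) (nk : Nᵒᵖ × K) : Type u :=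
  Σ m : M, p.obj (nk.1, m) × q.obj (op m, nk.2)

/-- The generating relation of the coend `∫^m p⟨n, m⟩ × q⟨m, k⟩`. -/
inductive ProfCompRel (p : (Nᵒᵖ × M) ⥤ Type u) (q : (Mᵒᵖ × K) ⥤ Type u) (nk : Nᵒᵖ × K) :
    ProfCompRaw p q nk → ProfCompRaw p q nk → Prop
  | mk {m m' : M} (h : m ⟶ m') (x : p.obj (nk.1, m)) (y : q.obj (op m', nk.2)) :
      ProfCompRel p q nk ⟨m', p.map ((𝟙 nk.1, h) : (nk.1, m) ⟶ (nk.1, m')) x, y⟩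
        ⟨m, x, q.map ((h.op, 𝟙 nk.2) : (op m', nk.2) ⟶ (op m, nk.2)) y⟩

/-- Profunctor composition `p ⋄ q : Nᵒᵖ × K ⥤ Type`, with
`(p ⋄ q)⟨n, k⟩ = ∫^m p⟨n, m⟩ × q⟨m, k⟩`. -/
def ProfComp (p : (Nᵒᵖ × M) ⥤ Type u) (q : (Mᵒᵖ × K) ⥤ Type u) : (Nᵒᵖ × K) ⥤ Type u where
  obj nk := Quot (ProfCompRel p q nk)
  map {nk nk'} f := TypeCat.ofHom <| Quot.lift
    (fun z => Quot.mk _ ⟨z.1, p.map ((f.1, 𝟙 z.1) : (nk.1, z.1) ⟶ (nk'.1, z.1)) z.2.1,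
      q.map ((𝟙 (op z.1), f.2) : (op z.1, nk.2) ⟶ (op z.1, nk'.2)) z.2.2⟩)
    (by
      rintro _ _ ⟨h, x, y⟩
      dsimp only
      rw [← map_prod_swap p, map_prod_swap q]
      exact Quot.sound (ProfCompRel.mk h _ _))
  map_id nk := by
    obtain ⟨n0, k0⟩ := nk
    ext z
    induction z using Quot.ind with
    | _ z =>
      show Quot.mk (ProfCompRel p q (n0, k0)) ⟨z.1,
          p.map ((𝟙 n0, 𝟙 z.1) : (n0, z.1) ⟶ (n0, z.1)) z.2.1,
          q.map ((𝟙 (op z.1), 𝟙 k0) : (op z.1, k0) ⟶ (op z.1, k0)) z.2.2⟩ =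
        Quot.mk (ProfCompRel p q (n0, k0)) z
      rw [show ((𝟙 n0, 𝟙 z.1) : (n0, z.1) ⟶ (n0, z.1)) = 𝟙 (n0, z.1) from rfl,
        show ((𝟙 (op z.1), 𝟙 k0) : (op z.1, k0) ⟶ (op z.1, k0)) = 𝟙 (op z.1, k0)
          from rfl,
        FunctorToTypes.map_id_apply, FunctorToTypes.map_id_apply]
      rfl
  map_comp {nk nk' nk''} f f' := by
    obtain ⟨n0, k0⟩ := nk
    obtain ⟨n1, k1⟩ := nk'
    obtain ⟨n2, k2⟩ := nk''
    obtain ⟨f1, f2⟩ := f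
    obtain ⟨f1', f2'⟩ := f'
    ext z
    induction z using Quot.ind with
    | _ z =>
      show Quot.mk (ProfCompRel p q (n2, k2)) ⟨z.1,
            p.map ((f1 ≫ f1', 𝟙 z.1) : (n0, z.1) ⟶ (n2, z.1)) z.2.1,
            q.map ((𝟙 (op z.1), f2 ≫ f2') : (op z.1, k0) ⟶ (op z.1, k2)) z.2.2⟩ =
          Quot.mk (ProfCompRel p q (n2, k2)) ⟨z.1,
            p.map ((f1', 𝟙 z.1) : (n1, z.1) ⟶ (n2, z.1))
              (p.map ((f1, 𝟙 z.1) : (n0, z.1) ⟶ (n1, z.1)) z.2.1),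
            q.map ((𝟙 (op z.1), f2') : (op z.1, k1) ⟶ (op z.1, k2))
              (q.map ((𝟙 (op z.1), f2) : (op z.1, k0) ⟶ (op z.1, k1)) z.2.2)⟩
      have hp : (((f1, 𝟙 z.1) : (n0, z.1) ⟶ (n1, z.1)) ≫
            ((f1', 𝟙 z.1) : (n1, z.1) ⟶ (n2, z.1)) : (n0, z.1) ⟶ (n2, z.1)) =
          ((f1 ≫ f1', 𝟙 z.1) : (n0, z.1) ⟶ (n2, z.1)) := by
        simp [prod_comp]
      have hq : (((𝟙 (op z.1), f2) : (op z.1, k0) ⟶ (op z.1, k1)) ≫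
            ((𝟙 (op z.1), f2') : (op z.1, k1) ⟶ (op z.1, k2)) :
            (op z.1, k0) ⟶ (op z.1, k2)) =
          ((𝟙 (op z.1), f2 ≫ f2') : (op z.1, k0) ⟶ (op z.1, k2)) := by
        simp [prod_comp]
      rw [← hp, ← hq, FunctorToTypes.map_comp_apply, FunctorToTypes.map_comp_apply]

/-!
Both sides at `k` are quotients of `Σ m n, a n × p⟨n, m⟩ × q⟨m, k⟩`, and the reshuffling
`⟨m, ⟨n, x, y⟩, z⟩ ↦ ⟨n, x, ⟨m, y, z⟩⟩` carries each generating relation of one side into the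
congruence generated by the other (a Fubini rule for coends in `Type`). The two induced maps are
mutually inverse on representatives, and the reshuffling visibly commutes with the action of
`K` on the `q`-component.
-/

section

variable {A B : Type*} [Category A] [Category B]

lemma map_pair_id_apply (F : A × B ⥤ Type*) {a : A} {b : B} (z : F.obj (a, b)) :
    F.map ((𝟙 a, 𝟙 b) : (a, b) ⟶ (a, b)) z = z :=
  F.map_id_apply (a, b) z

end

namespace Act

variable {a : N ⥤ Type u} {p : (Nᵒᵖ × M) ⥤ Type u}

lemma mk_map_eq {m : M} {n n' : N} (h : n ⟶ n') (x : a.obj n) (y : p.obj (op n', m)) :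
    (Quot.mk _ ⟨n', a.map h x, y⟩ : (Act a p).obj m) =
      Quot.mk _ ⟨n, x, p.map ((h.op, 𝟙 m) : (op n', m) ⟶ (op n, m)) y⟩ :=
  Quot.sound (ActRel.mk h x y)

end Act

namespace ProfComp

variable {p : (Nᵒᵖ × M) ⥤ Type u} {q : (Mᵒᵖ × K) ⥤ Type u}

lemma map_mk {nk nk' : Nᵒᵖ × K} (f : nk ⟶ nk') {m : M} (x : p.obj (nk.1, m))
    (y : q.obj (op m, nk.2)) :
    (ProfComp p q).map f (Quot.mk _ ⟨m, x, y⟩) =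
      Quot.mk _ ⟨m, p.map ((f.1, 𝟙 m) : (nk.1, m) ⟶ (nk'.1, m)) x,
        q.map ((𝟙 (op m), f.2) : (op m, nk.2) ⟶ (op m, nk'.2)) y⟩ :=
  rfl

lemma mk_map_eq {nk : Nᵒᵖ × K} {m m' : M} (h : m ⟶ m') (x : p.obj (nk.1, m))
    (y : q.obj (op m', nk.2)) :
    (Quot.mk _ ⟨m', p.map ((𝟙 nk.1, h) : (nk.1, m) ⟶ (nk.1, m')) x, y⟩ :
        (ProfComp p q).obj nk) =
      Quot.mk _ ⟨m, x, q.map ((h.op, 𝟙 nk.2) : (op m', nk.2) ⟶ (op m, nk.2)) y⟩ :=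
  Quot.sound (ProfCompRel.mk h x y)

end ProfComp

section Assoc

variable {a : N ⥤ Type u} {p : (Nᵒᵖ × M) ⥤ Type u} {q : (Mᵒᵖ × K) ⥤ Type u}

lemma act_profComp_mk_map_eq {k : K} {m : M} {n n' : N} (h : n ⟶ n') (x : a.obj n)
    (y : p.obj (op n', m)) (z : q.obj (op m, k)) :
    (Quot.mk _ ⟨n', a.map h x, Quot.mk _ ⟨m, y, z⟩⟩ : (Act a (ProfComp p q)).obj k) =
      Quot.mk _ ⟨n, x, Quot.mk _ ⟨m, p.map ((h.op, 𝟙 m) : (op n', m) ⟶ (op n, m)) y, z⟩⟩ := by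
  refine (Act.mk_map_eq h x _).trans (congrArg
    (fun t => (Quot.mk _ ⟨n, x, t⟩ : (Act a (ProfComp p q)).obj k)) ?_)
  rw [ProfComp.map_mk, map_pair_id_apply]

lemma act_act_mk_map_eq {k : K} {m : M} {n n' : N} (h : n ⟶ n') (x : a.obj n)
    (y : p.obj (op n', m)) (z : q.obj (op m, k)) :
    (Quot.mk _ ⟨m, Quot.mk _ ⟨n', a.map h x, y⟩, z⟩ : (Act (Act a p) q).obj k) =
      Quot.mk _ ⟨m, Quot.mk _ ⟨n, x, p.map ((h.op, 𝟙 m) : (op n', m) ⟶ (op n, m)) y⟩,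
        q.map ((𝟙 (op m), 𝟙 k) : (op m, k) ⟶ (op m, k)) z⟩ := by
  rw [Act.mk_map_eq h x, map_pair_id_apply]

variable (a p q)

def actAssocHom (k : K) : (Act (Act a p) q).obj k → (Act a (ProfComp p q)).obj k :=
  Quot.lift
    (fun s : Σ m : M, (Act a p).obj m × q.obj (op m, k) => Quot.lift
      (fun w : Σ n : N, a.obj n × p.obj (op n, s.1) =>
        Quot.mk _ ⟨w.1, w.2.1, Quot.mk _ ⟨s.1, w.2.2, s.2.2⟩⟩)
      (by
        rintro _ _ ⟨h, x, y⟩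
        exact act_profComp_mk_map_eq h x y s.2.2)
      s.2.1)
    (by
      rintro _ _ ⟨h, ⟨⟨n, x, y⟩⟩, z⟩
      exact congrArg (fun t => (Quot.mk _ ⟨n, x, t⟩ : (Act a (ProfComp p q)).obj k))
        (ProfComp.mk_map_eq (nk := (op n, k)) h y z))

def actAssocInv (k : K) : (Act a (ProfComp p q)).obj k → (Act (Act a p) q).obj k :=
  Quot.lift
    (fun s : Σ n : N, a.obj n × (ProfComp p q).obj (op n, k) => Quot.lift
      (fun t : Σ m : M, p.obj (op s.1, m) × q.obj (op m, k) =>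
        Quot.mk _ ⟨t.1, Quot.mk (ActRel a p t.1) ⟨s.1, s.2.1, t.2.1⟩, t.2.2⟩)
      (by
        rintro _ _ ⟨h, y, z⟩
        exact Act.mk_map_eq (a := Act a p) h (Quot.mk _ ⟨s.1, s.2.1, y⟩) z)
      s.2.2)
    (by
      rintro _ _ ⟨h, x, ⟨⟨m, y, z⟩⟩⟩
      exact act_act_mk_map_eq h x y z)

def actAssoc (k : K) : (Act (Act a p) q).obj k ≃ (Act a (ProfComp p q)).obj k where
  toFun := actAssocHom a p q k
  invFun := actAssocInv a p q k
  left_inv := by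
    rintro ⟨m, ⟨n, x, y⟩, z⟩
    rfl
  right_inv := by
    rintro ⟨n, x, ⟨m, y, z⟩⟩
    rfl

lemma actAssocHom_map {k k' : K} (g : k ⟶ k') (s : (Act (Act a p) q).obj k) :
    actAssocHom a p q k' ((Act (Act a p) q).map g s) =
      (Act a (ProfComp p q)).map g (actAssocHom a p q k s) := by
  obtain ⟨m, ⟨n, x, y⟩, z⟩ := s
  show _ = (Quot.mk _ ⟨n, x, Quot.mk _ ⟨m, p.map ((𝟙 (op n), 𝟙 m) : (op n, m) ⟶ (op n, m)) y,
    q.map ((𝟙 (op m), g) : (op m, k) ⟶ (op m, k')) z⟩⟩ : (Act a (ProfComp p q)).obj k')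
  rw [map_pair_id_apply]
  rfl

end Assoc

/-- The profunctor action on copresheaves is functorial with respect to profunctor
composition: `(a ⊗ p) ⊗ q ≅ a ⊗ (p ⋄ q)` naturally in `k : K`. -/
theorem act_profComp_iso (a : N ⥤ Type u) (p : (Nᵒᵖ × M) ⥤ Type u)
    (q : (Mᵒᵖ × K) ⥤ Type u) :
    Nonempty (Act (Act a p) q ≅ Act a (ProfComp p q)) :=
  ⟨NatIso.ofComponents (fun k => (actAssoc a p q k).toIso) fun g => by
    ext s
    exact actAssocHom_map a p q g s⟩
end

section
/- A pseudofunctor from a one-object bicategory to Cat defines an actegory: given a monoidal category M and a pseudofunctor F from the single-object bicategory associated with M to Cat, let C := the category that F assigns to the unique 0-cell. Then the assignment m ↦ F.map m, φ ↦ F.map₂ φ underlies a monoidal functor from M to the endofunctor category C ⥤ C equipped with its composition monoidal structure, whose structure isomorphisms F.map (m ⊗ n) ≅ F.map m ∘ F.map n and F.map (unit) ≅ 𝟭 are given by the compositor and unitor isomorphisms of the pseudofunctor F. -/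
/-!
For a one-object bicategory, the coherence axioms of a monoidal functor `M ⥤ (C ⥤ C)` are the
axioms of the pseudofunctor `F`, read through `Cat.Hom₂.toNatTrans`: naturality and associativity
of the compositors are the axioms of the lax functor `F.toLax`, and the unit axioms are the unitor
axioms of `F` solved for the unitors of `Cat`.
-/

open CategoryTheory MonoidalCategory

attribute [local instance] CategoryTheory.endofunctorMonoidalCategory

universe v u v₁ u₁

open Bicategory

namespace CategoryTheory.Pseudofunctor

section

variable {B C : Type*} [Bicategory B] [Bicategory C] (F : B ⥤ᵖ C)

lemma leftUnitor_map_hom {a b : B} (f : a ⟶ b) :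
    (Bicategory.leftUnitor (F.map f)).hom =
      (F.mapId a).inv ▷ F.map f ≫ (F.mapComp (𝟙 a) f).inv ≫
        F.map₂ (Bicategory.leftUnitor f).hom := by
  simp

lemma rightUnitor_map_hom {a b : B} (f : a ⟶ b) :
    (Bicategory.rightUnitor (F.map f)).hom =
      F.map f ◁ (F.mapId b).inv ≫ (F.mapComp f (𝟙 b)).inv ≫
        F.map₂ (Bicategory.rightUnitor f).hom := by
  simp

end

variable {M : Type u} [Category.{v} M] [MonoidalCategory M]
  (F : Pseudofunctor (MonoidalSingleObj M) Cat.{v₁, u₁})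

def toEndofunctors :
    M ⥤ (F.obj (MonoidalSingleObj.star M) ⥤ F.obj (MonoidalSingleObj.star M)) where
  obj m := (F.map (X := MonoidalSingleObj.star M) (Y := MonoidalSingleObj.star M) m).toFunctor
  map φ := (F.map₂ φ).toNatTrans
  map_id m := congrArg Cat.Hom₂.toNatTrans (F.map₂_id m)
  map_comp φ ψ := congrArg Cat.Hom₂.toNatTrans (F.map₂_comp φ ψ)

def toEndofunctorsCoreMonoidal : F.toEndofunctors.CoreMonoidal where
  εIso := Cat.Hom.toNatIso (F.mapId (MonoidalSingleObj.star M)).symm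
  μIso m n := Cat.Hom.toNatIso (F.mapComp (a := MonoidalSingleObj.star M)
    (b := MonoidalSingleObj.star M) (c := MonoidalSingleObj.star M) m n).symm
  μIso_hom_natural_left φ n :=
    congrArg Cat.Hom₂.toNatTrans (F.toLax.mapComp_naturality_left φ n).symm
  μIso_hom_natural_right m φ :=
    congrArg Cat.Hom₂.toNatTrans (F.toLax.mapComp_naturality_right m φ).symm
  associativity l m n := congrArg Cat.Hom₂.toNatTrans (F.toLax.map₂_associator l m n)
  left_unitality m := congrArg Cat.Hom₂.toNatTrans (F.leftUnitor_map_hom m)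
  right_unitality m := congrArg Cat.Hom₂.toNatTrans (F.rightUnitor_map_hom m)

end CategoryTheory.Pseudofunctor

/-- A pseudofunctor from the one-object bicategory associated with a monoidal category `M`
to `Cat` defines an actegory: with `C` the category assigned to the unique 0-cell, the
assignment `m ↦ F.map m`, `φ ↦ F.map₂ φ` underlies a monoidal functor
`M ⥤ (C ⥤ C)` (for the composition monoidal structure on `C ⥤ C`) whose structure
isomorphisms are given by the compositors and the unitor of `F`. -/
theorem pseudofunctor_singleObj_actegory (M : Type u) [Category.{v} M] [MonoidalCategory M]
    (F : Pseudofunctor (MonoidalSingleObj M) Cat.{v₁, u₁}) :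
    ∃ (Φ : M ⥤ (↑(F.obj (MonoidalSingleObj.star M)) ⥤ ↑(F.obj (MonoidalSingleObj.star M))))
      (e : Φ.CoreMonoidal),
      (∀ m : M, Φ.obj m =
        (F.map (X := MonoidalSingleObj.star M) (Y := MonoidalSingleObj.star M) m).toFunctor) ∧
      (∀ (m n : M) (φ : m ⟶ n), HEq (Φ.map φ)
        (F.map₂ (a := MonoidalSingleObj.star M) (b := MonoidalSingleObj.star M)
          (f := m) (g := n) φ).toNatTrans) ∧
      HEq e.εIso (Cat.Hom.toNatIso (F.mapId (MonoidalSingleObj.star M)).symm) ∧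
      (∀ m n : M, HEq (e.μIso m n)
        (Cat.Hom.toNatIso (F.mapComp (a := MonoidalSingleObj.star M) (b := MonoidalSingleObj.star M)
          (c := MonoidalSingleObj.star M) m n).symm)) :=
  ⟨F.toEndofunctors, F.toEndofunctorsCoreMonoidal, fun _ => rfl, fun _ _ _ => HEq.rfl, HEq.rfl,
    fun _ _ => HEq.rfl⟩
end
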